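/- arXiv:1005.2590 — 4 statements merged into one kernel-verified Lean document; each statement's English description precedes it below -/
import Mathlib

section
/- If D is an ultrafilter on a set I and f : I → I satisfies Ultrafilter.map f D = D, then the set {i ∈ I : f(i) = i} belongs to D. -/
/-!
Choose a representative `r` in each grand orbit of `f` (points whose forward orbits meet).
Off the forward orbit of `r`, the distance to it drops by one under `f`; on it, the index along
it rises by one, except at the single point where the orbit closes up. As `map f D = D`, every
set `S` satisfies `f x ∈ S ↔ x ∈ S` for `D`-almost all `x`. Applied to the parity classes of
these two numbers, and to the set of closing points, this makes `D`-almost every `x` a closing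
point whose image is again one, and then `f x = x`.
-/

namespace Ultrafilter

variable {I : Type*} {D : Ultrafilter I} {f : I → I}

theorem eventually_apply_mem_iff_of_map_eq (h : map f D = D) (S : Set I) :
    ∀ᶠ x in D, f x ∈ S ↔ x ∈ S := by
  have both : ∀ T ∈ D, ∀ᶠ x in D, f x ∈ T ∧ x ∈ T := fun T hT =>
    Filter.Eventually.and (mem_map.mp (by rwa [h])) hT
  rcases D.mem_or_compl_mem S with hS | hS
  · exact (both S hS).mono fun _ hx => iff_of_true hx.1 hx.2
  · exact (both _ hS).mono fun _ hx => iff_of_false hx.1 hx.2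

theorem eventually_apply_ne_add_one_of_map_eq (h : map f D = D) (φ : I → ℕ) :
    ∀ᶠ x in D, φ (f x) ≠ φ x + 1 ∧ φ x ≠ φ (f x) + 1 := by
  filter_upwards [eventually_apply_mem_iff_of_map_eq h {x | Even (φ x)}] with x hx
  constructor <;> intro e <;> rw [e, Nat.even_add_one] at hx
  · exact not_iff_self hx
  · exact not_iff_self hx.symm

end Ultrafilter

namespace Function

variable {α : Type*} (f : α → α)

noncomputable def hitTime (x : α) (S : Set α) : ℕ := sInf {k | f^[k] x ∈ S}

theorem iterate_hitTime_mem {x : α} {S : Set α} (h : ∃ k, f^[k] x ∈ S) :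
    f^[hitTime f x S] x ∈ S :=
  Nat.sInf_mem h

theorem hitTime_le {x : α} {S : Set α} {k : ℕ} (h : f^[k] x ∈ S) : hitTime f x S ≤ k :=
  Nat.sInf_le h

theorem hitTime_apply_add_one {x : α} {S : Set α} (hx : x ∉ S) (h : ∃ k, f^[k] x ∈ S) :
    hitTime f (f x) S + 1 = hitTime f x S := by
  have hpos : 1 ≤ hitTime f x S :=
    Nat.one_le_iff_ne_zero.mpr fun h0 => hx <| by
      simpa only [h0, iterate_zero, id_eq] using iterate_hitTime_mem f h
  simpa only [hitTime, iterate_succ_apply] using Nat.sInf_add hpos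

theorem hitTime_iterate_le_of_iterate_succ_eq {r : α} {i k : ℕ} (h : f^[i + 1] r = f^[k] r)
    (hk : k ≤ i) (n : ℕ) : hitTime f r {f^[n] r} ≤ i := by
  suffices ∃ m ≤ i, f^[n] r = f^[m] r by
    obtain ⟨m, hm, e⟩ := this
    exact (hitTime_le f (S := {f^[n] r}) e.symm).trans hm
  induction n with
  | zero => exact ⟨0, Nat.zero_le i, rfl⟩
  | succ n ih =>
    obtain ⟨m, hm, e⟩ := ih
    rcases hm.lt_or_eq with hlt | rfl
    · exact ⟨m + 1, hlt, by rw [iterate_succ_apply', e, iterate_succ_apply']⟩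
    · exact ⟨k, hk, by rw [iterate_succ_apply', e, ← h, iterate_succ_apply']⟩

def grandOrbit (x : α) : Set α := {y | ∃ m n, f^[m] x = f^[n] y}

theorem grandOrbit_apply (x : α) : grandOrbit f (f x) = grandOrbit f x := by
  ext y
  constructor
  · rintro ⟨m, n, e⟩
    exact ⟨m + 1, n, by rwa [iterate_succ_apply]⟩
  · rintro ⟨m, n, e⟩
    exact ⟨m, n + 1, by rw [← iterate_succ_apply, iterate_succ_apply', e, iterate_succ_apply']⟩

noncomputable def grandOrbitRep (x : α) : α :=
  Set.Nonempty.some (s := grandOrbit f x) ⟨x, 0, 0, rfl⟩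

theorem grandOrbitRep_mem (x : α) : grandOrbitRep f x ∈ grandOrbit f x :=
  Set.Nonempty.some_mem _

theorem grandOrbitRep_apply (x : α) : grandOrbitRep f (f x) = grandOrbitRep f x := by
  simp only [grandOrbitRep, grandOrbit_apply]

def repOrbit (x : α) : Set α := Set.range fun n => f^[n] (grandOrbitRep f x)

noncomputable def repIndex (x : α) : ℕ := hitTime f (grandOrbitRep f x) {x}

theorem repOrbit_apply (x : α) : repOrbit f (f x) = repOrbit f x := by
  rw [repOrbit, repOrbit, grandOrbitRep_apply]

theorem exists_iterate_mem_repOrbit (x : α) : ∃ k, f^[k] x ∈ repOrbit f x := by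
  obtain ⟨m, n, e⟩ := grandOrbitRep_mem f x
  exact ⟨m, n, e.symm⟩

theorem hitTime_repOrbit_apply_add_one {x : α} (hx : x ∉ repOrbit f x) :
    hitTime f (f x) (repOrbit f (f x)) + 1 = hitTime f x (repOrbit f x) := by
  rw [repOrbit_apply]
  exact hitTime_apply_add_one f hx (exists_iterate_mem_repOrbit f x)

theorem iterate_repIndex {x : α} (hx : x ∈ repOrbit f x) :
    f^[repIndex f x] (grandOrbitRep f x) = x :=
  iterate_hitTime_mem f (S := {x}) hx

theorem repIndex_apply_le {x : α} (hx : x ∈ repOrbit f x) :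
    repIndex f (f x) ≤ repIndex f x + 1 := by
  refine hitTime_le f (S := {f x}) ?_
  rw [grandOrbitRep_apply, iterate_succ_apply', iterate_repIndex f hx]
  rfl

theorem apply_mem_repOrbit_apply {x : α} (hx : x ∈ repOrbit f x) : f x ∈ repOrbit f (f x) := by
  obtain ⟨n, e : f^[n] _ = x⟩ := hx
  exact ⟨n + 1, by simp only [grandOrbitRep_apply, iterate_succ_apply', e]⟩

/-- By `h₂` the orbit of the representative closes up at `f x`, so `repIndex` is maximal there. -/
theorem apply_eq_self_of_repIndex_apply_le {x : α} (hx : x ∈ repOrbit f x)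
    (h₁ : repIndex f (f x) ≤ repIndex f x) (h₂ : repIndex f (f (f x)) ≤ repIndex f (f x)) :
    f x = x := by
  have hfx := apply_mem_repOrbit_apply f hx
  have hffx := apply_mem_repOrbit_apply f hfx
  have hclose : f^[repIndex f (f x) + 1] (grandOrbitRep f x) =
      f^[repIndex f (f (f x))] (grandOrbitRep f x) := by
    rw [iterate_succ_apply', ← grandOrbitRep_apply f x, iterate_repIndex f hfx,
      ← grandOrbitRep_apply f (f x), iterate_repIndex f hffx]
  have h₃ : repIndex f x ≤ repIndex f (f x) := by
    obtain ⟨n, e : f^[n] _ = x⟩ := id hx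
    simpa only [repIndex, e] using hitTime_iterate_le_of_iterate_succ_eq f hclose h₂ n
  rw [← iterate_repIndex f hfx, grandOrbitRep_apply, le_antisymm h₁ h₃, iterate_repIndex f hx]

end Function

open Function in
theorem fixed_points_mem_of_map_eq_self {I : Type*} (D : Ultrafilter I) (f : I → I)
    (h : Ultrafilter.map f D = D) : {i : I | f i = i} ∈ D := by
  have hmem : ∀ᶠ x in D, x ∈ repOrbit f x := by
    filter_upwards [D.eventually_apply_ne_add_one_of_map_eq h
      fun x => hitTime f x (repOrbit f x)] with x hx
    by_contra hx'
    exact hx.2 (hitTime_repOrbit_apply_add_one f hx').symm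
  have hstep := D.eventually_apply_ne_add_one_of_map_eq h (repIndex f)
  have hlast := D.eventually_apply_mem_iff_of_map_eq h {x | repIndex f (f x) ≤ repIndex f x}
  filter_upwards [hmem, hstep, hlast] with x hx hne hiff
  have hle : repIndex f (f x) ≤ repIndex f x := by
    have := repIndex_apply_le f hx
    omega
  exact apply_eq_self_of_repIndex_apply_le f hx hle (hiff.mpr hle)
end

section
/- Let (X_k)_{k ∈ K} be a family of topological spaces and let X be their Fréchet disjoint union: the disjoint union ⨿_k X_k together with one extra point ∞, where each X_k is open with its own topology and the neighborhoods of ∞ are the sets containing ∞ and containing all but finitely many of the X_k entirely. Then for every ultrafilter F (on any index set I), X is F-compact if and only if every X_k is F-compact. -/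
/-- A topological space `X` is `D`-compact if every `I`-indexed family in `X` has a
`D`-limit point. -/
def UltrafilterCompact {I : Type*} (X : Type*) [TopologicalSpace X] (D : Ultrafilter I) : Prop :=
  ∀ x : I → X, ∃ p : X, ∀ U ∈ nhds p, {i : I | x i ∈ U} ∈ D

/-- The Fréchet disjoint union of the family `X k`: the disjoint union together with an
extra point `none = ∞`, where each summand is open with its own topology, and a set
containing `∞` is open iff it contains all but finitely many summands entirely. -/
def frechetTopology {K : Type*} (X : K → Type*) [∀ k, TopologicalSpace (X k)] :
    TopologicalSpace (Option (Σ k, X k)) where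
  IsOpen U := (∀ k, IsOpen {x : X k | (some ⟨k, x⟩ : Option (Σ k, X k)) ∈ U}) ∧
    (none ∈ U → {k | ¬ ∀ x : X k, (some ⟨k, x⟩ : Option (Σ k, X k)) ∈ U}.Finite)
  isOpen_univ := ⟨fun _ => isOpen_univ, fun _ => by simp⟩
  isOpen_inter := by
    rintro U V ⟨hU1, hU2⟩ ⟨hV1, hV2⟩
    refine ⟨fun k => (hU1 k).inter (hV1 k), fun h => ((hU2 h.1).union (hV2 h.2)).subset ?_⟩
    intro k hk
    by_contra hc
    simp only [Set.mem_union, Set.mem_setOf_eq, not_or, not_not] at hc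
    exact hk fun x => ⟨hc.1 x, hc.2 x⟩
  isOpen_sUnion := by
    intro S hS
    constructor
    · intro k
      have : {x : X k | (some ⟨k, x⟩ : Option (Σ k, X k)) ∈ ⋃₀ S} =
          ⋃ U ∈ S, {x : X k | (some ⟨k, x⟩ : Option (Σ k, X k)) ∈ U} := by
        ext x; simp
      rw [this]
      exact isOpen_biUnion fun U hU => (hS U hU).1 k
    · rintro ⟨U, hUS, hU⟩
      refine ((hS U hUS).2 hU).subset ?_
      intro k hk
      exact fun hall => hk fun x => ⟨U, hUS, hall x⟩

/-! Each summand embeds in the Fréchet union as a clopen subspace, so a limit of a family in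
`X k` exists upstairs and can be pulled back. Conversely, a family either lies `F`-almost
everywhere in one summand, where that summand's `F`-compactness gives a limit, or meets every
summand on an `F`-small set; in the latter case it tends to `∞`, because a neighbourhood of `∞`
misses only finitely many summands and an ultrafilter contains no finite union of small sets. -/

open Filter Topology Set

theorem ultrafilterCompact_iff_exists_tendsto {I X : Type*} [TopologicalSpace X]
    (D : Ultrafilter I) :
    UltrafilterCompact X D ↔ ∀ x : I → X, ∃ p, Tendsto x D (𝓝 p) :=
  Iff.rfl

namespace UltrafilterCompact

variable {I Y Z : Type*} [TopologicalSpace Y] [TopologicalSpace Z] {D : Ultrafilter I}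

theorem of_isClosedEmbedding (hZ : UltrafilterCompact Z D) {e : Y → Z}
    (he : IsClosedEmbedding e) : UltrafilterCompact Y D := by
  rw [ultrafilterCompact_iff_exists_tendsto] at hZ ⊢
  intro y
  obtain ⟨p, hp⟩ := hZ (e ∘ y)
  obtain ⟨q, rfl⟩ : p ∈ range e :=
    he.isClosed_range.mem_of_tendsto hp (Eventually.of_forall fun i => mem_range_self (y i))
  exact ⟨q, he.tendsto_nhds_iff.2 hp⟩

theorem exists_tendsto_of_eventually_mem_range (hY : UltrafilterCompact Y D) {e : Y → Z}
    (he : Continuous e) {x : I → Z} (hx : ∀ᶠ i in D, x i ∈ range e) :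
    ∃ p, Tendsto x D (𝓝 p) := by
  obtain ⟨i₀, y₀, -⟩ := D.nonempty_of_mem hx
  have : Nonempty Y := ⟨y₀⟩
  obtain ⟨q, hq⟩ := (ultrafilterCompact_iff_exists_tendsto D).1 hY (Function.invFun e ∘ x)
  refine ⟨e q, (he.tendsto q |>.comp hq).congr' ?_⟩
  filter_upwards [hx] with i hi using Function.invFun_eq hi

end UltrafilterCompact

namespace FrechetTopology

attribute [local instance] frechetTopology

variable {K : Type*} {X : K → Type*} [∀ k, TopologicalSpace (X k)]

theorem continuous_some_mk (k : K) : Continuous (some ∘ Sigma.mk k : X k → _) :=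
  continuous_def.2 fun _ hU => hU.1 k

theorem isOpenMap_some_mk (k : K) : IsOpenMap (some ∘ Sigma.mk k : X k → _) := by
  intro V hV
  refine ⟨fun k' => ?_, by simp⟩
  by_cases h : k' = k
  · subst h
    change IsOpen ((some ∘ Sigma.mk k') ⁻¹' (some ∘ Sigma.mk k' '' V))
    rwa [preimage_image_eq V ((Option.some_injective _).comp sigma_mk_injective)]
  · convert isOpen_empty
    ext
    simp [Ne.symm h]

theorem isClosed_range_some_mk (k : K) : IsClosed (range (some ∘ Sigma.mk k : X k → _)) := by
  refine isOpen_compl_iff.1 ⟨fun k' => ?_, fun _ => (finite_singleton k).subset ?_⟩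
  · by_cases h : k' = k
    · subst h
      convert isOpen_empty
      ext
      simp
    · convert isOpen_univ
      ext
      simp [Ne.symm h]
  · intro k' hk'
    obtain ⟨v, hv⟩ := not_forall.1 hk'
    obtain ⟨w, hw⟩ := not_not.1 hv
    exact (Sigma.mk.inj_iff.1 (Option.some_injective _ hw)).1.symm

theorem isClosedEmbedding_some_mk (k : K) : IsClosedEmbedding (some ∘ Sigma.mk k : X k → _) :=
  ⟨(IsOpenEmbedding.of_continuous_injective_isOpenMap (continuous_some_mk k)
    ((Option.some_injective _).comp sigma_mk_injective) (isOpenMap_some_mk k)).isEmbedding,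
    isClosed_range_some_mk k⟩

theorem tendsto_none_of_forall_not_eventually_mem_range {I : Type*} {F : Ultrafilter I}
    {x : I → Option (Σ k, X k)}
    (hx : ∀ k, ¬ ∀ᶠ i in F, x i ∈ range (some ∘ Sigma.mk k)) :
    Tendsto x F (𝓝 none) := by
  refine (nhds_basis_opens _).tendsto_right_iff.2 fun W ⟨hnW, hW⟩ => ?_
  have hout : {i | x i ∈ W}ᶜ ⊆ ⋃ k ∈ {k | ¬ ∀ v : X k, some ⟨k, v⟩ ∈ W},
      {i | x i ∈ range (some ∘ Sigma.mk k)} := by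
    rintro i (hi : x i ∉ W)
    cases h : x i with
    | none => exact absurd (h ▸ hnW) hi
    | some s =>
      obtain ⟨k, v⟩ := s
      exact mem_biUnion (fun hall => hi (h ▸ hall v)) ⟨v, h.symm⟩
  by_contra hW'
  obtain ⟨k, -, hk⟩ := (Ultrafilter.finite_biUnion_mem_iff (hW.2 hnW)).1
    (F.mem_of_superset (F.compl_mem_iff_notMem.2 hW') hout)
  exact hx k hk

end FrechetTopology

theorem frechetUnion_ultrafilterCompact_iff {K : Type*} (X : K → Type*)
    [∀ k, TopologicalSpace (X k)] {I : Type*} (F : Ultrafilter I) :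
    @UltrafilterCompact I (Option (Σ k, X k)) (frechetTopology X) F ↔
      ∀ k, UltrafilterCompact (X k) F := by
  let _ := frechetTopology X
  refine ⟨fun h k => h.of_isClosedEmbedding (FrechetTopology.isClosedEmbedding_some_mk k),
    fun h => (ultrafilterCompact_iff_exists_tendsto F).2 fun x => ?_⟩
  by_cases hx : ∃ k, ∀ᶠ i in F, x i ∈ range (some ∘ Sigma.mk k)
  · obtain ⟨k, hk⟩ := hx
    exact (h k).exists_tendsto_of_eventually_mem_range (FrechetTopology.continuous_some_mk k) hk
  · exact ⟨none,
      FrechetTopology.tendsto_none_of_forall_not_eventually_mem_range (not_exists.1 hx)⟩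
end

section
/- Let D be an ultrafilter on I, E an ultrafilter on J with E = Ultrafilter.map f D, and let K be a class of L-structures (closed under isomorphism) that is D-closed, i.e., closed under elementary substructures and under ultraproducts by D of families of members of K. Then for any M ∈ K, the ultrapower ∏_E M is isomorphic to an elementary substructure of ∏_D M, hence belongs to K. -/
/-!
The map `g ↦ g ∘ f` on representatives descends to a map `∏_E M → ∏_D M`, and by Łoś's theorem
it is elementary: for `φ` and representatives `gᵢ`, both `φ.Realize (gᵢ)` and
`φ.Realize (gᵢ ∘ f)` say that `{j | φ.Realize (gᵢ j)}` is `E`-large, i.e. its preimage under `f` is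
`D`-large. Its range is the required elementary substructure of `∏_D M`. Łoś's theorem needs `M`
nonempty; for empty `M` both ultrapowers are isomorphic to `M`, since an empty structure is
determined by its nullary relations.
-/

open FirstOrder Filter

universe u

namespace FirstOrder.Language

open Structure

variable {L : Language}

namespace ElementaryEmbedding

variable {M N : Type*} [L.Structure M] [L.Structure N]

def elementaryRange (h : M ↪ₑ[L] N) : L.ElementarySubstructure N where
  toSubstructure := h.toEmbedding.toHom.range
  isElementary' n φ x := by
    set e := h.toEmbedding.equivRange
    have hx : ((↑) : _ → N) ∘ x = h ∘ e.symm ∘ x :=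
      funext fun i => congrArg Subtype.val (e.apply_symm_apply (x i)).symm
    have hx' : e ∘ e.symm ∘ x = x := funext fun i => e.apply_symm_apply (x i)
    rw [hx, h.map_formula, ← StrongHomClass.realize_formula e, hx']

noncomputable def equivElementaryRange (h : M ↪ₑ[L] N) : M ≃[L] h.elementaryRange :=
  h.toEmbedding.equivRange

end ElementaryEmbedding

namespace Ultraproduct

variable {α β : Type*}

def comapElementaryEmbedding (u : Ultrafilter α) (f : α → β) (M : β → Type*)
    [∀ b, L.Structure (M b)] [∀ b, Nonempty (M b)] :
    ((u.map f : Filter β).Product M) ↪ₑ[L] (u : Filter α).Product fun a => M (f a) where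
  -- `∀ᶠ b in map f u, p b` unfolds to `∀ᶠ a in u, p (f a)`, so `g ↦ g ∘ f` respects the setoids
  toFun := Quotient.map' (fun g a => g (f a)) fun _ _ h => h
  map_formula' n φ x := by
    obtain ⟨g, rfl⟩ : ∃ g : Fin n → ∀ b, M b, x = fun i => (g i : (u.map f : Filter β).Product M) :=
      ⟨fun i => (x i).out, funext fun i => (Quotient.out_eq' (x i)).symm⟩
    exact (realize_formula_cast (u := u) φ fun i a => g i (f a)).trans
      (realize_formula_cast (u := u.map f) φ g).symm

theorem relMap_nullary_iff (u : Ultrafilter α) {M : Type*} [L.Structure M] (r : L.Relations 0)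
    (x : Fin 0 → (u : Filter α).Product fun _ => M) (y : Fin 0 → M) : RelMap r x ↔ RelMap r y := by
  rw [Subsingleton.elim x fun i => ((fun _ => y i : α → M) : (u : Filter α).Product fun _ => M)]
  exact (relMap_quotient_mk' (s := (u : Filter α).productSetoid fun _ => M) r _).trans
    eventually_const

instance isEmpty_product (u : Ultrafilter α) {M : Type*} [IsEmpty M] :
    IsEmpty ((u : Filter α).Product fun _ => M) :=
  have := nonempty_of_neBot (u : Filter α)
  inferInstanceAs (IsEmpty (Quotient _))

def equivOfIsEmpty (u : Ultrafilter α) (M : Type*) [L.Structure M] [IsEmpty M] :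
    ((u : Filter α).Product fun _ => M) ≃[L] M where
  toEquiv := Equiv.equivOfIsEmpty _ _
  map_fun' F x := isEmptyElim (funMap F x)
  map_rel' {n} r x := by
    cases n with
    | zero => exact (relMap_nullary_iff u r x _).symm
    | succ n => exact isEmptyElim (x 0)

theorem nonempty_elementaryEmbedding_map (u : Ultrafilter α) (f : α → β) (M : Type*)
    [L.Structure M] :
    Nonempty (((u.map f : Filter β).Product fun _ => M) ↪ₑ[L]
      (u : Filter α).Product fun _ => M) := by
  cases isEmpty_or_nonempty M with
  | inl _ =>
    exact ⟨((equivOfIsEmpty u M).symm.comp (equivOfIsEmpty (u.map f) M)).toElementaryEmbedding⟩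
  | inr _ => exact ⟨comapElementaryEmbedding u f fun _ => M⟩

end Ultraproduct

end FirstOrder.Language

open FirstOrder.Language

theorem dClosed_class_closed_under_quotient_ultrapower {L : Language} {I J : Type u}
    (D : Ultrafilter I) (E : Ultrafilter J) (f : I → J) (hE : E = Ultrafilter.map f D)
    (K : (N : Type u) → [L.Structure N] → Prop)
    (hiso : ∀ (N N' : Type u) [L.Structure N] [L.Structure N'], K N → (N ≃[L] N') → K N')
    (helem : ∀ (N : Type u) [L.Structure N], K N → ∀ S : L.ElementarySubstructure N, K S)
    (hultra : ∀ (Mfam : I → Type u) [∀ i, L.Structure (Mfam i)],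
      (∀ i, K (Mfam i)) → K ((D : Filter I).Product Mfam))
    (M : Type u) [L.Structure M] (hM : K M) :
    (∃ S : L.ElementarySubstructure ((D : Filter I).Product fun _ => M),
      Nonempty (((E : Filter J).Product fun _ => M) ≃[L] S)) ∧
      K ((E : Filter J).Product fun _ => M) := by
  subst hE
  obtain ⟨h⟩ := Ultraproduct.nonempty_elementaryEmbedding_map (L := L) D f M
  have hS : K h.elementaryRange := helem _ (hultra _ fun _ => hM) _
  exact ⟨⟨h.elementaryRange, ⟨h.equivElementaryRange⟩⟩, hiso _ _ hS h.equivElementaryRange.symm⟩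
end

section
/- If λ is an infinite cardinal and the ultrafilter D on I is (cf λ, cf λ)-regular or (λ⁺, λ⁺)-regular, then D is (λ, λ)-regular. -/
universe u

/-- `D` is `(λ,λ)`-regular: there is a `λ`-indexed family of members of `D` such that every
point lies in fewer than `λ` of its sets. -/
def UFRegular {I : Type u} (lam : Cardinal.{u}) (D : Ultrafilter I) : Prop :=
  ∃ A : lam.out → Set I, (∀ α, A α ∈ D) ∧ ∀ i : I, Cardinal.mk {α | i ∈ A α} < lam

/-!
If `D` is `(cf λ, cf λ)`-regular, reindex a witness by a cofinal `S ⊆ λ` of size `cf λ` and send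
`α < λ` to the set indexed by some `s ≥ α` in `S`. A point lies in fewer than `cf λ` of the
`S`-indexed sets, so their indices are bounded by some `β < λ`, and the point lies in at most
`|β| < λ` of the new sets.

If `D` is `(λ⁺, λ⁺)`-regular with witness `(A k)`, each point `i` lies in at most `λ` of the `A k`
and can code them injectively by ordinals `v i k < λ`. If for some `k` the map `i ↦ v i k` tends
to `λ` along `D`, the sets `{i | α ≤ v i k}` witness `(λ, λ)`-regularity. Otherwise every `k` has
a bound `x k` with `v i k < x k` for `D`-almost all `i`; by pigeonhole more than `λ` of the `k`
share a bound `x`, and the sets `A k ∩ {i | v i k < x}` for these `k` witness regularity, since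
`i` codes its memberships injectively below `x`.
-/

open Cardinal Set Filter Function

section

variable {I : Type u}

def IsRegularFamily (lam : Cardinal.{u}) (D : Ultrafilter I) {J : Type u} (B : J → Set I) :
    Prop :=
  (∀ j, B j ∈ D) ∧ ∀ i, #{j | i ∈ B j} < lam

variable {D : Ultrafilter I} {lam : Cardinal.{u}}

theorem IsRegularFamily.comp_injective {J K : Type u} {B : K → Set I}
    (hB : IsRegularFamily lam D B) {f : J → K} (hf : Injective f) :
    IsRegularFamily lam D (B ∘ f) :=
  ⟨fun j => hB.1 (f j), fun i => (mk_preimage_of_injective f _ hf).trans_lt (hB.2 i)⟩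

theorem UFRegular.exists_isRegularFamily (h : UFRegular lam D) {J : Type u} (hJ : #J ≤ lam) :
    ∃ B : J → Set I, IsRegularFamily lam D B := by
  obtain ⟨A, hA⟩ := h
  obtain ⟨f⟩ : Nonempty (J ↪ lam.out) := by rwa [← Cardinal.le_def, mk_out]
  exact ⟨A ∘ f, IsRegularFamily.comp_injective hA f.injective⟩

theorem IsRegularFamily.ufRegular {J : Type u} {B : J → Set I} (hB : IsRegularFamily lam D B)
    (hJ : lam ≤ #J) : UFRegular lam D := by
  obtain ⟨f⟩ : Nonempty (lam.out ↪ J) := by rwa [← Cardinal.le_def, mk_out]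
  exact ⟨B ∘ f, hB.comp_injective f.injective⟩

theorem UFRegular.of_cof (h : UFRegular lam.ord.cof D) : UFRegular lam D := by
  obtain ⟨S, hS, hScard⟩ := Order.exists_cof_eq lam.ord.ToType
  rw [Ordinal.cof_toType] at hScard
  obtain ⟨C, hC⟩ := h.exists_isRegularFamily hScard.le
  choose s hsS hle using hS
  refine IsRegularFamily.ufRegular (J := lam.ord.ToType) (B := fun x => C ⟨s x, hsS x⟩)
    ⟨fun x => hC.1 _, fun i => ?_⟩ (mk_ord_toType lam).ge
  have hsmall : #(Subtype.val '' {k : S | i ∈ C k}) < Order.cof lam.ord.ToType := by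
    rw [Ordinal.cof_toType]
    exact mk_image_le.trans_lt (hC.2 i)
  obtain ⟨b, hb⟩ := not_isCofinal_iff.1 fun hcof => (Order.cof_le hcof).not_gt hsmall
  calc #{x | i ∈ C ⟨s x, hsS x⟩}
      ≤ #(Iio b) := mk_le_mk_of_subset fun x hx => (hle x).trans_lt (hb _ ⟨_, hx, rfl⟩)
    _ < lam := by simpa using mk_Iio_lt b

theorem UFRegular.of_tendsto_atTop (hlam : ℵ₀ ≤ lam) {v : I → lam.ord.ToType}
    (hv : Tendsto v D atTop) : UFRegular lam D := by
  refine IsRegularFamily.ufRegular (J := lam.ord.ToType) (B := fun x => {i | x ≤ v i})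
    ⟨tendsto_atTop.1 hv, fun i => ?_⟩ (mk_ord_toType lam).ge
  exact (show #(Iic (v i)) < lam by simpa using mk_Iic_lt (v i) (by simp) (by simpa using hlam))

theorem ufRegular_of_injOn_of_eventually_lt (hlam : ℵ₀ ≤ lam) {K : Type u} (hK : lam < #K)
    {A : K → Set I} (hA : ∀ k, A k ∈ D) (v : I → K → lam.ord.ToType)
    (hv : ∀ i, InjOn (v i) {k | i ∈ A k}) (hbdd : ∀ k, ∃ x, ∀ᶠ i in D, v i k < x) :
    UFRegular lam D := by
  choose y hy using hbdd
  obtain ⟨x, hx⟩ := infinite_pigeonhole_card_lt y (by simpa using hK)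
    (by simpa using hlam.trans hK.le)
  rw [mk_ord_toType] at hx
  refine IsRegularFamily.ufRegular (J := y ⁻¹' {x}) (B := fun k => A k ∩ {i | v i k < x})
    ⟨fun k => inter_mem (hA k) ?_, fun i => ?_⟩ hx.le
  · have hk := hy k
    rwa [show y k = x from k.2] at hk
  · have hinj : Injective fun k : {k : y ⁻¹' {x} | i ∈ A k ∩ {i | v i k < x}} =>
        (⟨v i k, k.2.2⟩ : Iio x) := fun k₁ k₂ h =>
      Subtype.ext (Subtype.ext (hv i k₁.2.1 k₂.2.1 (congrArg Subtype.val h)))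
    have hIio : #(Iio x) < lam := by simpa using mk_Iio_lt x
    exact (mk_le_of_injective hinj).trans_lt hIio

theorem ufRegular_of_lt_mk (hlam : ℵ₀ ≤ lam) {K : Type u} (hK : lam < #K) {A : K → Set I}
    (hA : ∀ k, A k ∈ D) (hcount : ∀ i, #{k | i ∈ A k} ≤ lam) : UFRegular lam D := by
  have : Nonempty lam.ord.ToType :=
    mk_ne_zero_iff.1 (by simpa using (aleph0_pos.trans_le hlam).ne')
  have hcode (i : I) : ∃ f : K → lam.ord.ToType, InjOn f {k | i ∈ A k} := by
    obtain ⟨e⟩ : Nonempty ({k | i ∈ A k} ↪ lam.ord.ToType) := by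
      rw [← Cardinal.le_def, mk_ord_toType]
      exact hcount i
    exact exists_injOn_iff_injective.2 ⟨e, e.injective⟩
  choose v hv using hcode
  by_cases htend : ∃ k, Tendsto (v · k) D atTop
  · obtain ⟨k, hk⟩ := htend
    exact .of_tendsto_atTop hlam hk
  simp only [not_exists] at htend
  refine ufRegular_of_injOn_of_eventually_lt hlam hK hA v hv fun k => ?_
  obtain ⟨x, hx⟩ := not_forall.1 (mt tendsto_atTop.2 (htend k))
  exact ⟨x, by simpa using Ultrafilter.eventually_not.2 hx⟩

theorem UFRegular.of_succ (hlam : ℵ₀ ≤ lam) (h : UFRegular (Order.succ lam) D) :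
    UFRegular lam D := by
  obtain ⟨A, hA, hcount⟩ := h
  refine ufRegular_of_lt_mk hlam ?_ hA fun i => Order.lt_succ_iff.1 (hcount i)
  rw [mk_out]
  exact Order.lt_succ lam

end

theorem regular_of_cof_or_succ_regular {I : Type u} (lam : Cardinal.{u})
    (hlam : Cardinal.aleph0 ≤ lam) (D : Ultrafilter I)
    (h : UFRegular lam.ord.cof D ∨ UFRegular (Order.succ lam) D) :
    UFRegular lam D :=
  h.elim UFRegular.of_cof (UFRegular.of_succ hlam)
end
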